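/- arXiv:1608.05836 — 2 statements merged into one kernel-verified Lean document; each statement's English description precedes it below -/
import Mathlib

section
/- For integers m, n ≥ 1 define g_{m,n}(x,y) = [ (x − x_{0,n})(y − y_{m,0}) − x_{0,n}·y_{m,0} ]·(x − x_{m,n})^{m−1}·(y − y_{m,n})^{n−1} ∈ ℝ[x,y]. Then g_{m,n} has degree at most m in x and at most n in y, and for all integers 0 ≤ i ≤ m and 0 ≤ j ≤ n: (∂_x^i ∂_y^j g_{m,n})(x_{i,j}, y_{i,j}) = m!·n! if (i,j) = (m,n), and 0 otherwise. Hence g_{m,n} is the classical bivariate Abel polynomial for the partial derivative operators on the grid A·ℕ². -/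
/-!
Write `g = F(x) G(y) - x_{0,n} y_{m,0} P(x) Q(y)` with `P = (x - x_{m,n})^{m-1}`,
`F = (x - x_{0,n}) P`, and `Q`, `G` likewise in `y`, so that `∂_x^i ∂_y^j g` is computed one
variable at a time. The closed form of the derivatives of `(x - c)^k` gives the relation
`(m - i) F^{(i)}(t) = (m (t - a) - i (c - a)) P^{(i)}(t)`, whose coefficient at the node
`t = x_{i,j}` is `m a₁₂ (j - n)`. Multiplied by `(m - i)(n - j)`, the value at the node becomes
`m n a₁₂ a₂₁ P^{(i)} Q^{(j)} ((j - n)(i - m) - (m - i)(n - j)) = 0`; on the edges `i = m` or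
`j = n` the corner facts `P^{(m)} = 0`, `F^{(m)} = m!` take over.
-/

open MvPolynomial

noncomputable section

/-- `ℝ[x,y] = MvPolynomial (Fin 2) ℝ`, with `x = X 0`, `y = X 1`. -/
abbrev MvP2 := MvPolynomial (Fin 2) ℝ

/-- The partial derivative `∂_{x_i}` as a linear endomorphism. -/
def pE (i : Fin 2) : Module.End ℝ MvP2 :=
  (MvPolynomial.pderiv (R := ℝ) i).toLinearMap

/-- The grid node `x_{i,j} = a₁₁·i + a₁₂·j`. -/
def gridX (A : Matrix (Fin 2) (Fin 2) ℝ) (i j : ℕ) : ℝ := A 0 0 * i + A 0 1 * j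

/-- The grid node `y_{i,j} = a₂₁·i + a₂₂·j`. -/
def gridY (A : Matrix (Fin 2) (Fin 2) ℝ) (i j : ℕ) : ℝ := A 1 0 * i + A 1 1 * j

open Polynomial (derivative)

namespace Polynomial

variable {R : Type*} [CommRing R]

theorem eval_iterate_derivative_X_sub_C_pow (c t : R) (n i : ℕ) :
    (derivative^[i] ((X - C c) ^ n)).eval t = n.descFactorial i * (t - c) ^ (n - i) := by
  simp [iterate_derivative_X_sub_pow, nsmul_eq_mul]

theorem X_sub_C_mul_X_sub_C_pow (a c : R) (k : ℕ) :
    (X - C a) * (X - C c) ^ k = (X - C c) ^ (k + 1) + C (c - a) * (X - C c) ^ k := by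
  rw [C_sub]; ring

theorem sub_mul_eval_iterate_derivative_X_sub_C_mul_X_sub_C_pow (a c t : R) (k i : ℕ) :
    ((k + 1 : R) - i) * (derivative^[i] ((X - C a) * (X - C c) ^ k)).eval t =
      ((k + 1) * (t - a) - i * (c - a)) * (derivative^[i] ((X - C c) ^ k)).eval t := by
  simp only [X_sub_C_mul_X_sub_C_pow, iterate_map_add, iterate_derivative_C_mul, eval_add,
    eval_mul, eval_C, eval_iterate_derivative_X_sub_C_pow]
  rcases le_or_gt i k with hik | hki
  · have hfact :
        ((k + 1 : R) - i) * ((k + 1).descFactorial i : R) = (k + 1) * k.descFactorial i := by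
      have h := congrArg (Nat.cast (R := R)) (Nat.descFactorial_succ (k + 1) i)
      rw [Nat.succ_descFactorial_succ] at h
      push_cast [Nat.cast_sub (show i ≤ k + 1 by omega)] at h
      linear_combination -h
    rw [show k + 1 - i = k - i + 1 by omega, pow_succ]
    linear_combination (t - c) ^ (k - i) * (t - c) * hfact
  · rw [Nat.descFactorial_of_lt hki]
    obtain rfl | hki := Nat.eq_or_lt_of_le hki
    · simp
    · rw [Nat.descFactorial_of_lt hki]; simp

theorem iterate_derivative_X_sub_C_mul_X_sub_C_pow_self (a c : R) (k : ℕ) :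
    derivative^[k + 1] ((X - C a) * (X - C c) ^ k) = ((k + 1).factorial : R[X]) := by
  rw [X_sub_C_mul_X_sub_C_pow, iterate_map_add, iterate_derivative_C_mul,
    iterate_derivative_X_sub_pow_self, iterate_derivative_X_sub_pow,
    Nat.descFactorial_of_lt k.lt_succ_self]
  simp

end Polynomial

namespace MvPolynomial

variable {σ : Type*}

section CommSemiring

variable {R : Type*} [CommSemiring R]

theorem pderiv_toMvPolynomial_self (i : σ) (f : Polynomial R) :
    pderiv i (f.toMvPolynomial i) = (derivative f).toMvPolynomial i := by
  simp [Polynomial.toMvPolynomial]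

theorem pderiv_toMvPolynomial_of_ne {i j : σ} (hij : i ≠ j) (f : Polynomial R) :
    pderiv i (f.toMvPolynomial j) = 0 := by
  simp [Polynomial.toMvPolynomial, pderiv_X_of_ne hij.symm]

theorem iterate_pderiv_toMvPolynomial_mul {i : σ} {q : MvPolynomial σ R} (hq : pderiv i q = 0)
    (f : Polynomial R) (p : ℕ) :
    (pderiv i)^[p] (f.toMvPolynomial i * q) = (derivative^[p] f).toMvPolynomial i * q := by
  induction p with
  | zero => rfl
  | succ p ih =>
    rw [Function.iterate_succ_apply', ih, Derivation.leibniz, hq, pderiv_toMvPolynomial_self,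
      smul_zero, zero_add, smul_eq_mul, mul_comm, Function.iterate_succ_apply']

theorem iterate_pderiv_toMvPolynomial_mul_toMvPolynomial {i j : σ} (hij : i ≠ j)
    (f g : Polynomial R) (p q : ℕ) :
    (pderiv i)^[p] ((pderiv j)^[q] (f.toMvPolynomial i * g.toMvPolynomial j)) =
      (derivative^[p] f).toMvPolynomial i * (derivative^[q] g).toMvPolynomial j := by
  rw [mul_comm, iterate_pderiv_toMvPolynomial_mul (pderiv_toMvPolynomial_of_ne hij.symm f),
    mul_comm, iterate_pderiv_toMvPolynomial_mul (pderiv_toMvPolynomial_of_ne hij _)]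

theorem degreeOf_toMvPolynomial_le [DecidableEq σ] (i j : σ) (f : Polynomial R) :
    degreeOf i (f.toMvPolynomial j) ≤ if i = j then f.natDegree else 0 := by
  have hX : degreeOf i (X j : MvPolynomial σ R) ≤ if i = j then 1 else 0 := by
    simpa [degreeOf_def, Multiset.count_singleton] using
      Multiset.count_le_of_le i (degrees_X' (R := R) j)
  rw [Polynomial.toMvPolynomial, Polynomial.aeval_eq_sum_range]
  refine (degreeOf_sum_le _ _ _).trans (Finset.sup_le fun n hn => ?_)
  rw [smul_eq_C_mul]
  refine (degreeOf_C_mul_le _ _ _).trans ((degreeOf_pow_le _ _ _).trans ?_)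
  have hn : n ≤ f.natDegree := Finset.mem_range_succ_iff.mp hn
  split_ifs at hX ⊢ <;> nlinarith

end CommSemiring

section CommRing

variable {R : Type*} [CommRing R]

theorem degreeOf_sub_smul_toMvPolynomial_mul_toMvPolynomial_le {i j : σ} (hij : i ≠ j)
    (f g p q : Polynomial R) (r : R) :
    degreeOf i (f.toMvPolynomial i * g.toMvPolynomial j -
      r • (p.toMvPolynomial i * q.toMvPolynomial j)) ≤ max f.natDegree p.natDegree := by
  classical
  have hprod : ∀ f g : Polynomial R,
      degreeOf i (f.toMvPolynomial i * g.toMvPolynomial j) ≤ f.natDegree := fun f g => by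
    have hf := degreeOf_toMvPolynomial_le i i f
    have hg := degreeOf_toMvPolynomial_le i j g
    simp only [if_true, if_neg hij, nonpos_iff_eq_zero] at hf hg
    exact (degreeOf_mul_le _ _ _).trans (by omega)
  refine (degreeOf_sub_le _ _ _).trans (max_le_max (hprod f g) ?_)
  rw [smul_eq_C_mul]
  exact (degreeOf_C_mul_le _ _ _).trans (hprod p q)

def bivariateAbel (i j : σ) (a b c d : R) (k l : ℕ) : MvPolynomial σ R :=
  ((X i - C a) * (X j - C b) - C (a * b)) * (X i - C c) ^ k * (X j - C d) ^ l

theorem bivariateAbel_comm (i j : σ) (a b c d : R) (k l : ℕ) :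
    bivariateAbel i j a b c d k l = bivariateAbel j i b a d c l k := by
  simp only [bivariateAbel, mul_comm a b]
  ring

theorem bivariateAbel_eq (i j : σ) (a b c d : R) (k l : ℕ) :
    bivariateAbel i j a b c d k l =
      ((Polynomial.X - Polynomial.C a) * (Polynomial.X - Polynomial.C c) ^ k).toMvPolynomial i *
          ((Polynomial.X - Polynomial.C b) * (Polynomial.X - Polynomial.C d) ^ l).toMvPolynomial j -
        (a * b) • (((Polynomial.X - Polynomial.C c) ^ k).toMvPolynomial i *
          ((Polynomial.X - Polynomial.C d) ^ l).toMvPolynomial j) := by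
  simp [bivariateAbel, smul_eq_C_mul]
  ring

theorem degreeOf_bivariateAbel_le {i j : σ} (hij : i ≠ j) (a b c d : R) (k l : ℕ) :
    degreeOf i (bivariateAbel i j a b c d k l) ≤ k + 1 := by
  rw [bivariateAbel_eq]
  refine (degreeOf_sub_smul_toMvPolynomial_mul_toMvPolynomial_le hij _ _ _ _ _).trans
    (max_le ?_ ((Polynomial.natDegree_pow_le_of_le k (Polynomial.natDegree_X_sub_C_le _)).trans ?_))
  · compute_degree
    omega
  · omega

end CommRing

end MvPolynomial

/-- `F, P, G, Q` stand for the values at the node of `F^{(i)}, P^{(i)}, G^{(j)}, Q^{(j)}`. -/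
theorem abel_node_value {K : Type*} [Field K] [CharZero K] {m n i j : ℕ} {α β F P G Q : K}
    (hi : i ≤ m) (hj : j ≤ n)
    (hF : ((m : K) - i) * F = m * α * (j - n) * P) (hG : ((n : K) - j) * G = n * β * (i - m) * Q)
    (hFm : i = m → F = m.factorial ∧ P = 0) (hGn : j = n → G = n.factorial ∧ Q = 0) :
    F * G - α * n * (β * m) * (P * Q) =
      if i = m ∧ j = n then (m.factorial * n.factorial : K) else 0 := by
  rcases hi.lt_or_eq with hi | rfl <;> rcases hj.lt_or_eq with hj | rfl
  · have hmi : (m : K) - i ≠ 0 := sub_ne_zero.mpr (by exact_mod_cast hi.ne')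
    have hnj : (n : K) - j ≠ 0 := sub_ne_zero.mpr (by exact_mod_cast hj.ne')
    rw [if_neg (by omega)]
    refine (mul_eq_zero.mp ?_).resolve_left (mul_ne_zero hmi hnj)
    linear_combination ((n : K) - j) * G * hF + m * α * (j - n) * P * hG
  · have hmi : (m : K) - i ≠ 0 := sub_ne_zero.mpr (by exact_mod_cast hi.ne')
    obtain ⟨rfl, rfl⟩ := hGn rfl
    have hF0 : F = 0 := (mul_eq_zero.mp (hF.trans (by ring))).resolve_left hmi
    simp [hF0, hi.ne]
  · have hnj : (n : K) - j ≠ 0 := sub_ne_zero.mpr (by exact_mod_cast hj.ne')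
    obtain ⟨rfl, rfl⟩ := hFm rfl
    have hG0 : G = 0 := (mul_eq_zero.mp (hG.trans (by ring))).resolve_left hnj
    simp [hG0, hj.ne]
  · obtain ⟨rfl, rfl⟩ := hFm rfl
    obtain ⟨rfl, rfl⟩ := hGn rfl
    simp

theorem pE_pow_mul_pE_pow_toMvPolynomial_mul (i j : ℕ) (f g : Polynomial ℝ) :
    ((pE 0) ^ i * (pE 1) ^ j) (f.toMvPolynomial 0 * g.toMvPolynomial 1) =
      (derivative^[i] f).toMvPolynomial 0 * (derivative^[j] g).toMvPolynomial 1 := by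
  rw [Module.End.mul_apply, Module.End.pow_apply, Module.End.pow_apply]
  exact iterate_pderiv_toMvPolynomial_mul_toMvPolynomial (by decide) f g i j

theorem eval_pE_pow_mul_pE_pow_bivariateAbel (a b c d t u : ℝ) (k l i j : ℕ) :
    eval ![t, u] (((pE 0) ^ i * (pE 1) ^ j) (bivariateAbel 0 1 a b c d k l)) =
      (derivative^[i] ((Polynomial.X - Polynomial.C a) *
          (Polynomial.X - Polynomial.C c) ^ k)).eval t *
        (derivative^[j] ((Polynomial.X - Polynomial.C b) *
          (Polynomial.X - Polynomial.C d) ^ l)).eval u -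
      a * b * ((derivative^[i] ((Polynomial.X - Polynomial.C c) ^ k)).eval t *
        (derivative^[j] ((Polynomial.X - Polynomial.C d) ^ l)).eval u) := by
  rw [bivariateAbel_eq, map_sub, map_smul, pE_pow_mul_pE_pow_toMvPolynomial_mul,
    pE_pow_mul_pE_pow_toMvPolynomial_mul]
  simp [smul_eq_C_mul]

/-- the polynomial
`g_{m,n} = [(x−x_{0,n})(y−y_{m,0}) − x_{0,n}y_{m,0}]·(x−x_{m,n})^{m−1}(y−y_{m,n})^{n−1}`
has degree at most `m` in `x` and at most `n` in `y`, and satisfies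
`(∂_x^i ∂_y^j g_{m,n})(x_{i,j}, y_{i,j}) = m!·n!·δ_{(i,j),(m,n)}` for
`i ≤ m`, `j ≤ n`; hence it is the classical bivariate Abel polynomial on `A·ℕ²`. -/
theorem classical_bivariate_abel (A : Matrix (Fin 2) (Fin 2) ℝ)
    (m n : ℕ) (hm : 1 ≤ m) (hn : 1 ≤ n)
    (g : MvP2)
    (hg : g = ((X 0 - C (gridX A 0 n)) * (X 1 - C (gridY A m 0)) -
          C (gridX A 0 n * gridY A m 0)) *
        (X 0 - C (gridX A m n)) ^ (m - 1) * (X 1 - C (gridY A m n)) ^ (n - 1)) :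
    degreeOf 0 g ≤ m ∧ degreeOf 1 g ≤ n ∧
    ∀ i ≤ m, ∀ j ≤ n,
      eval ![gridX A i j, gridY A i j] (((pE 0) ^ i * (pE 1) ^ j) g) =
        if i = m ∧ j = n then (m.factorial * n.factorial : ℝ) else 0 := by
  obtain ⟨k, rfl⟩ : ∃ k, m = k + 1 := ⟨m - 1, by omega⟩
  obtain ⟨l, rfl⟩ : ∃ l, n = l + 1 := ⟨n - 1, by omega⟩
  replace hg : g = bivariateAbel 0 1 (gridX A 0 (l + 1)) (gridY A (k + 1) 0)
      (gridX A (k + 1) (l + 1)) (gridY A (k + 1) (l + 1)) k l := hg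
  subst hg
  refine ⟨degreeOf_bivariateAbel_le (by decide) .., ?_, fun i hi j hj => ?_⟩
  · rw [bivariateAbel_comm]
    exact degreeOf_bivariateAbel_le (by decide) ..
  rw [eval_pE_pow_mul_pE_pow_bivariateAbel,
    show gridX A 0 (l + 1) * gridY A (k + 1) 0 = A 0 1 * (l + 1 : ℕ) * (A 1 0 * (k + 1 : ℕ)) by
      simp [gridX, gridY]]
  refine abel_node_value hi hj ?_ ?_ ?_ ?_
  · push_cast
    rw [Polynomial.sub_mul_eval_iterate_derivative_X_sub_C_mul_X_sub_C_pow]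
    congr 1
    simp [gridX]
    ring
  · push_cast
    rw [Polynomial.sub_mul_eval_iterate_derivative_X_sub_C_mul_X_sub_C_pow]
    congr 1
    simp [gridY]
    ring
  · rintro rfl
    simp [Polynomial.iterate_derivative_X_sub_C_mul_X_sub_C_pow_self,
      Polynomial.iterate_derivative_X_sub_pow]
  · rintro rfl
    simp [Polynomial.iterate_derivative_X_sub_C_mul_X_sub_C_pow_self,
      Polynomial.iterate_derivative_X_sub_pow]

end
end

section
/- For integers m, n ≥ 1 define t(x,y) = [ (x − x_{0,n})(y − y_{m,0}) − x_{0,n}·y_{m,0} ]·(x − x_{m,n} − 1)_{(m−1)}·(y − y_{m,n} − 1)_{(n−1)} ∈ ℝ[x,y]. Then t has degree at most m in x and at most n in y, and for all integers 0 ≤ i ≤ m and 0 ≤ j ≤ n: (Δ_x^i Δ_y^j t)(x_{i,j}, y_{i,j}) = m!·n! if (i,j) = (m,n), and 0 otherwise. Hence t is the bivariate delta Abel polynomial for the pair of forward difference operators on the grid A·ℕ². -/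
/-!
The polynomial separates as `t = P(x) Q(y) - x_{0,n} y_{m,0} F(x) G(y)` with
`F = (x - x_{m,n} - 1)_{(m-1)}`, `P = (x - x_{0,n}) F`, and `G`, `Q` likewise, so
`Δ_x^i Δ_y^j t` is computed factor by factor. `P` is the univariate Abel polynomial of `Δ` for the
nodes `x_{0,n} + a₁₁ i`: from `P = (x - x_{m,n})_{(m)} + a₁₁ m F` one gets
`Δ^i P = (m)_{(i)} (x - x_{0,n} - a₁₁ i) (x - x_{m,n} - 1)_{(m-1-i)}` for `i < m`, and `Δ^m P = m!`.
At the node `(x_{i,j}, y_{i,j})` the two linear factors become `a₁₂ (j - n)` and `a₂₁ (i - m)`, and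
`(m - i) (m)_{(i)} = m (m-1)_{(i)}` makes the two terms cancel unless `(i, j) = (m, n)`.
-/

open MvPolynomial

noncomputable section

/-- The shift operator `E_v : p(x) ↦ p(x + v)`. -/
def shiftOp (v : Fin 2 → ℝ) : Module.End ℝ MvP2 :=
  (MvPolynomial.aeval (fun i => X i + C (v i)) : MvP2 →ₐ[ℝ] MvP2).toLinearMap

open fwdDiff

section Univariate

variable {M G : Type*} [AddCommMonoid M] [AddCommGroup G]

theorem fwdDiff_iter_sub (h : M) (f g : M → G) (n : ℕ) :
    (Δ_[h])^[n] (f - g) = (Δ_[h])^[n] f - (Δ_[h])^[n] g := by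
  simpa only [fwdDiff_aux.coe_fwdDiffₗ_pow] using map_sub (fwdDiff_aux.fwdDiffₗ M G h ^ n) f g

variable {R : Type*} [CommRing R]

theorem fwdDiff_descPochhammer_eval (k : ℕ) :
    Δ_[1] (fun x : R ↦ (descPochhammer R (k + 1)).eval x) =
      fun x ↦ (k + 1) * (descPochhammer R k).eval x := by
  funext x
  rw [fwdDiff, descPochhammer_succ_eval k x, descPochhammer_succ_left]
  simp only [Polynomial.eval_mul, Polynomial.eval_X, Polynomial.eval_comp, Polynomial.eval_sub,
    Polynomial.eval_one, add_sub_cancel_right]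
  ring

theorem fwdDiff_iter_descPochhammer_eval (k s : ℕ) :
    (Δ_[1])^[s] (fun x : R ↦ (descPochhammer R k).eval x) =
      fun x ↦ k.descFactorial s * (descPochhammer R (k - s)).eval x := by
  induction s with
  | zero => simp
  | succ s ih =>
    rw [Function.iterate_succ_apply', ih]
    rcases Nat.lt_or_ge s k with hs | hs
    · obtain ⟨l, hl⟩ : ∃ l, k - s = l + 1 := ⟨k - s - 1, by omega⟩
      have hk : k - (s + 1) = l := by omega
      funext x
      have := congrFun (fwdDiff_descPochhammer_eval (R := R) l) x
      simp only [fwdDiff] at this ⊢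
      rw [hl, hk, ← mul_sub, this, Nat.descFactorial_succ, hl]
      push_cast
      ring
    · rw [Nat.sub_eq_zero_of_le hs, Nat.sub_eq_zero_of_le (by omega : k ≤ s + 1),
        Nat.descFactorial_eq_zero_iff_lt.mpr (by omega : k < s + 1)]
      funext x
      simp [fwdDiff]

theorem fwdDiff_iter_descPochhammer_eval_sub (k s : ℕ) (c x : R) :
    (Δ_[1])^[s] (fun y : R ↦ (descPochhammer R k).eval (y - c)) x =
      k.descFactorial s * (descPochhammer R (k - s)).eval (x - c) := by
  simpa only [← sub_eq_add_neg, fwdDiff_iter_descPochhammer_eval] using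
    fwdDiff_iter_comp_add (1 : R) (fun y ↦ (descPochhammer R k).eval y) (-c) s x

theorem fwdDiff_iter_descPochhammer_eval_sub_of_lt {k s : ℕ} (h : k < s) (c : R) :
    (Δ_[1])^[s] (fun x : R ↦ (descPochhammer R k).eval (x - c)) = 0 := by
  funext x
  simp [fwdDiff_iter_descPochhammer_eval_sub, Nat.descFactorial_eq_zero_iff_lt.mpr h]

theorem cast_sub_mul_descFactorial {m i : ℕ} (hi : i ≤ m) :
    ((m : R) - i) * m.descFactorial i = m * (m - 1).descFactorial i := by
  have h : (m - i) * m.descFactorial i = m * (m - 1).descFactorial i := by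
    rw [← Nat.descFactorial_succ]
    obtain _ | m := m
    · simp_all
    · exact Nat.succ_descFactorial_succ m i
  exact_mod_cast congrArg (Nat.cast : ℕ → R) h

theorem fwdDiff_iter_abel {a c d : R} {m i : ℕ} (hc : c = a + d * m + 1) (hi : i < m) (x : R) :
    (Δ_[1])^[i] (fun y ↦ (y - a) * (descPochhammer R (m - 1)).eval (y - c)) x =
      m.descFactorial i * (x - (a + d * i)) * (descPochhammer R (m - 1 - i)).eval (x - c) := by
  obtain ⟨l, rfl⟩ : ∃ l, m = l + 1 := ⟨m - 1, by omega⟩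
  have hsplit : (fun x ↦ (x - a) * (descPochhammer R (l + 1 - 1)).eval (x - c)) =
      (fun x ↦ (descPochhammer R (l + 1)).eval (x - (c - 1))) +
        (d * (l + 1 : ℕ)) • fun x ↦ (descPochhammer R l).eval (x - c) := by
    funext x
    simp only [descPochhammer_succ_left, Polynomial.eval_mul, Polynomial.eval_X,
      Polynomial.eval_comp, Polynomial.eval_sub, Polynomial.eval_one, Pi.add_apply,
      Pi.smul_apply, smul_eq_mul, add_tsub_cancel_right, sub_sub, sub_add_cancel]
    rw [hc]
    ring
  have hl : l + 1 - i = (l - i) + 1 := by omega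
  rw [hsplit, fwdDiff_iter_add, fwdDiff_iter_const_smul, Pi.add_apply, Pi.smul_apply, smul_eq_mul,
    fwdDiff_iter_descPochhammer_eval_sub, fwdDiff_iter_descPochhammer_eval_sub, hl,
    descPochhammer_succ_left, add_tsub_cancel_right]
  simp only [Polynomial.eval_mul, Polynomial.eval_X, Polynomial.eval_comp, Polynomial.eval_sub,
    Polynomial.eval_one, sub_sub, sub_add_cancel]
  have hfac := cast_sub_mul_descFactorial (R := R) hi.le
  rw [add_tsub_cancel_right] at hfac
  linear_combination (-((l + 1).descFactorial i * (descPochhammer R (l - i)).eval (x - c))) * hc -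
    d * (descPochhammer R (l - i)).eval (x - c) * hfac

theorem fwdDiff_iter_abel_self {a c d : R} {m : ℕ} (hc : c = a + d * m + 1) (hm : 0 < m) :
    (Δ_[1])^[m] (fun x ↦ (x - a) * (descPochhammer R (m - 1)).eval (x - c)) =
      fun _ ↦ (m.factorial : R) := by
  obtain ⟨l, rfl⟩ : ∃ l, m = l + 1 := ⟨m - 1, by omega⟩
  rw [Function.iterate_succ_apply', funext (fwdDiff_iter_abel hc l.lt_succ_self)]
  have hfac : (l + 1).descFactorial l = (l + 1).factorial := by
    simpa using Nat.factorial_mul_descFactorial (n := l + 1) (k := l) (by omega)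
  funext x
  simp only [fwdDiff, hfac, add_tsub_cancel_right, tsub_self, descPochhammer_zero,
    Polynomial.eval_one, mul_one]
  ring

end Univariate

section Bivariate

theorem eval_shiftOp (w v : Fin 2 → ℝ) (p : MvP2) : eval v (shiftOp w p) = eval (v + w) p := by
  simp only [shiftOp, AlgHom.toLinearMap_apply, aeval_eq_bind₁, eval, eval₂Hom_bind₁]
  congr 2 with i
  simp

theorem eval_shiftOp_sub_one_pow (w : Fin 2 → ℝ) (i : ℕ) (p : MvP2) (v : Fin 2 → ℝ) :
    eval v (((shiftOp w - 1) ^ i) p) = (Δ_[w])^[i] (fun v ↦ eval v p) v := by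
  induction i generalizing v with
  | zero => rfl
  | succ i ih =>
    rw [pow_succ', Module.End.mul_apply, Function.iterate_succ_apply']
    simp [fwdDiff, eval_shiftOp, ih]

variable {R : Type*} [CommRing R]

theorem fwdDiff_iter_mul_apply_zero (f g : R → R) (i : ℕ) :
    (Δ_[![1, 0]])^[i] (fun v : Fin 2 → R ↦ f (v 0) * g (v 1)) =
      fun v ↦ (Δ_[1])^[i] f (v 0) * g (v 1) := by
  induction i with
  | zero => rfl
  | succ i ih =>
    rw [Function.iterate_succ_apply', ih, Function.iterate_succ_apply']
    funext v
    simp [fwdDiff, sub_mul]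

theorem fwdDiff_iter_mul_apply_one (f g : R → R) (j : ℕ) :
    (Δ_[![0, 1]])^[j] (fun v : Fin 2 → R ↦ f (v 0) * g (v 1)) =
      fun v ↦ f (v 0) * (Δ_[1])^[j] g (v 1) := by
  induction j with
  | zero => rfl
  | succ j ih =>
    rw [Function.iterate_succ_apply', ih, Function.iterate_succ_apply']
    funext v
    simp [fwdDiff, mul_sub]

theorem eval_shiftOp_sub_one_pow_mul_pow {t : MvP2} {f g f' g' : ℝ → ℝ} {κ : ℝ}
    (ht : ∀ v, eval v t = f (v 0) * g (v 1) - κ * (f' (v 0) * g' (v 1))) (i j : ℕ) (x y : ℝ) :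
    eval ![x, y] (((shiftOp ![1, 0] - 1) ^ i * (shiftOp ![0, 1] - 1) ^ j) t) =
      (Δ_[1])^[i] f x * (Δ_[1])^[j] g y - κ * ((Δ_[1])^[i] f' x * (Δ_[1])^[j] g' y) := by
  have ht' : (fun v ↦ eval v t) =
      (fun v ↦ f (v 0) * g (v 1)) - κ • fun v ↦ f' (v 0) * g' (v 1) := funext ht
  rw [Module.End.mul_apply, eval_shiftOp_sub_one_pow, funext (eval_shiftOp_sub_one_pow _ j t),
    ht', fwdDiff_iter_sub, fwdDiff_iter_const_smul, fwdDiff_iter_mul_apply_one,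
    fwdDiff_iter_mul_apply_one, fwdDiff_iter_sub, fwdDiff_iter_const_smul,
    fwdDiff_iter_mul_apply_zero, fwdDiff_iter_mul_apply_zero]
  rfl

end Bivariate

section Degree

variable {σ R ι : Type*} [CommRing R]

theorem degreeOf_X_sub_C_le (k l : σ) (u : R) :
    degreeOf k (X l - C u) ≤ degreeOf k (X l : MvPolynomial σ R) := by
  simpa using degreeOf_sub_le k (X l) (C u)

theorem degreeOf_prod_X_sub_C_le (k l : σ) (s : Finset ι) (u : ι → R) :
    degreeOf k (∏ r ∈ s, (X l - C (u r))) ≤ s.card * degreeOf k (X l : MvPolynomial σ R) :=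
  (degreeOf_prod_le k s _).trans <| by
    simpa using Finset.sum_le_sum fun r _ ↦ degreeOf_X_sub_C_le k l (u r)

theorem degreeOf_abel_le (k p q : σ) (a b κ : R) (u v : ℕ → R) {m n : ℕ} (hm : 1 ≤ m)
    (hn : 1 ≤ n) :
    degreeOf k (((X p - C a) * (X q - C b) - C κ) *
        (∏ r ∈ Finset.range (m - 1), (X p - C (u r))) *
        (∏ r ∈ Finset.range (n - 1), (X q - C (v r)))) ≤
      m * degreeOf k (X p : MvPolynomial σ R) + n * degreeOf k (X q : MvPolynomial σ R) := by
  have hlin : degreeOf k ((X p - C a) * (X q - C b) - C κ) ≤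
      degreeOf k (X p : MvPolynomial σ R) + degreeOf k (X q : MvPolynomial σ R) := by
    refine (degreeOf_sub_le _ _ _).trans (max_le ?_ (by simp))
    exact (degreeOf_mul_le _ _ _).trans (add_le_add (degreeOf_X_sub_C_le _ _ _)
      (degreeOf_X_sub_C_le _ _ _))
  have hx := degreeOf_prod_X_sub_C_le k p (Finset.range (m - 1)) u
  have hy := degreeOf_prod_X_sub_C_le k q (Finset.range (n - 1)) v
  rw [Finset.card_range] at hx hy
  calc _ ≤ _ := (degreeOf_mul_le _ _ _).trans (add_le_add (degreeOf_mul_le _ _ _) le_rfl)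
    _ ≤ _ := add_le_add (add_le_add hlin hx) hy
    _ = _ := by
      obtain ⟨m, rfl⟩ := Nat.exists_eq_add_of_le hm
      obtain ⟨n, rfl⟩ := Nat.exists_eq_add_of_le hn
      simp only [add_tsub_cancel_left]
      ring

end Degree

theorem fwdDiff_iter_abel_grid (A : Matrix (Fin 2) (Fin 2) ℝ) {m n i j : ℕ} (hm : 1 ≤ m)
    (hn : 1 ≤ n) (hi : i ≤ m) (hj : j ≤ n) :
    (Δ_[1])^[i] (fun x ↦ (x - gridX A 0 n) *
          (descPochhammer ℝ (m - 1)).eval (x - (gridX A m n + 1))) (gridX A i j) *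
        (Δ_[1])^[j] (fun y ↦ (y - gridY A m 0) *
          (descPochhammer ℝ (n - 1)).eval (y - (gridY A m n + 1))) (gridY A i j) -
      gridX A 0 n * gridY A m 0 *
        ((Δ_[1])^[i] (fun x ↦ (descPochhammer ℝ (m - 1)).eval (x - (gridX A m n + 1)))
            (gridX A i j) *
          (Δ_[1])^[j] (fun y ↦ (descPochhammer ℝ (n - 1)).eval (y - (gridY A m n + 1)))
            (gridY A i j)) =
      if i = m ∧ j = n then (m.factorial * n.factorial : ℝ) else 0 := by
  set a := gridX A 0 n
  set b := gridY A m 0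
  set c := gridX A m n + 1
  set e := gridY A m n + 1
  have hcx : c = a + A 0 0 * m + 1 := by simp only [a, c, gridX]; ring
  have hcy : e = b + A 1 1 * n + 1 := by simp only [b, e, gridY]; ring
  have hx : gridX A i j - (a + A 0 0 * i) = A 0 1 * (j - n) := by simp only [a, gridX]; ring
  have hy : gridY A i j - (b + A 1 1 * j) = A 1 0 * (i - m) := by simp only [b, gridY]; ring
  rcases hi.lt_or_eq' with hi | rfl <;> rcases hj.lt_or_eq' with hj | rfl
  · have hab : a * b = A 0 1 * n * (A 1 0 * m) := by simp [a, b, gridX, gridY]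
    rw [if_neg (by omega), fwdDiff_iter_abel hcx hi, fwdDiff_iter_abel hcy hj,
      fwdDiff_iter_descPochhammer_eval_sub, fwdDiff_iter_descPochhammer_eval_sub, hx, hy, hab]
    linear_combination (A 0 1 * A 1 0 * (descPochhammer ℝ (m - 1 - i)).eval (gridX A i j - c) *
      (descPochhammer ℝ (n - 1 - j)).eval (gridY A i j - e)) *
      ((n - j) * n.descFactorial j * cast_sub_mul_descFactorial (R := ℝ) hi.le +
        m * (m - 1).descFactorial i * cast_sub_mul_descFactorial (R := ℝ) hj.le)
  · rw [if_neg (by omega), fwdDiff_iter_abel hcx hi, fwdDiff_iter_abel_self hcy hn, hx,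
      fwdDiff_iter_descPochhammer_eval_sub_of_lt (by omega : n - 1 < n)]
    simp
  · rw [if_neg (by omega), fwdDiff_iter_abel hcy hj, fwdDiff_iter_abel_self hcx hm, hy,
      fwdDiff_iter_descPochhammer_eval_sub_of_lt (by omega : m - 1 < m)]
    simp
  · rw [if_pos ⟨rfl, rfl⟩, fwdDiff_iter_abel_self hcx hm, fwdDiff_iter_abel_self hcy hn,
      fwdDiff_iter_descPochhammer_eval_sub_of_lt (by omega : m - 1 < m)]
    simp

/-- the polynomial
`t = [(x−x_{0,n})(y−y_{m,0}) − x_{0,n}y_{m,0}]·(x−x_{m,n}−1)_{(m−1)}·(y−y_{m,n}−1)_{(n−1)}`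
(falling factorials expanded as products) has degree at most `m` in `x` and at
most `n` in `y`, and satisfies
`(Δ_x^i Δ_y^j t)(x_{i,j}, y_{i,j}) = m!·n!·δ_{(i,j),(m,n)}` for `i ≤ m`, `j ≤ n`,
where `Δ_x = E_{(1,0)} − id` and `Δ_y = E_{(0,1)} − id` are the forward
difference operators; hence it is the bivariate delta Abel polynomial for the
pair of forward difference operators on the grid `A·ℕ²`. -/
theorem forward_difference_bivariate_abel (A : Matrix (Fin 2) (Fin 2) ℝ)
    (m n : ℕ) (hm : 1 ≤ m) (hn : 1 ≤ n)
    (Dx Dy : Module.End ℝ MvP2)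
    (hDx : Dx = shiftOp ![1, 0] - 1) (hDy : Dy = shiftOp ![0, 1] - 1)
    (t : MvP2)
    (htdef : t = ((X 0 - C (gridX A 0 n)) * (X 1 - C (gridY A m 0)) -
          C (gridX A 0 n * gridY A m 0)) *
        (∏ r ∈ Finset.range (m - 1), (X 0 - C (gridX A m n + 1 + r))) *
        (∏ r ∈ Finset.range (n - 1), (X 1 - C (gridY A m n + 1 + r)))) :
    degreeOf 0 t ≤ m ∧ degreeOf 1 t ≤ n ∧
    ∀ i ≤ m, ∀ j ≤ n,
      eval ![gridX A i j, gridY A i j] ((Dx ^ i * Dy ^ j) t) =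
        if i = m ∧ j = n then (m.factorial * n.factorial : ℝ) else 0 := by
  subst hDx hDy
  refine ⟨htdef ▸ (degreeOf_abel_le 0 0 1 _ _ _ _ _ hm hn).trans (by simp [degreeOf_X]),
    htdef ▸ (degreeOf_abel_le 1 0 1 _ _ _ _ _ hm hn).trans (by simp [degreeOf_X]),
    fun i hi j hj ↦ ?_⟩
  refine (eval_shiftOp_sub_one_pow_mul_pow (fun v ↦ ?_) i j _ _).trans
    (fwdDiff_iter_abel_grid A hm hn hi hj)
  simp only [htdef, C_add, map_natCast, sub_add_eq_sub_sub, map_mul, map_sub, eval_X, eval_C,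
    map_prod, descPochhammer_eval_eq_prod_range]
  ring

end
end
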